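/- arXiv:2209.14016 — 3 statements merged into one kernel-verified Lean document; each statement's English description precedes it below -/
import Mathlib

section
/- Let γ be a 1-form on a manifold N of dimension n with γ ∧ (dγ)^{k+1} = 0 identically. Then (dγ)^{k+2} = 0 identically. -/
open ExteriorAlgebra

section AuxForPowSucc
variable {M : Type*} [AddCommGroup M] [Module ℝ M]

private lemma aux_comm (m : M) {b : ExteriorAlgebra ℝ M}
    (hb : b ∈ (LinearMap.range (ExteriorAlgebra.ι ℝ : M →ₗ[ℝ] ExteriorAlgebra ℝ M)) ^ 2) :
    ExteriorAlgebra.ι ℝ m * b = b * ExteriorAlgebra.ι ℝ m := by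
  rw [pow_two] at hb
  refine Submodule.mul_induction_on hb ?_ ?_
  · rintro _ ⟨u, rfl⟩ _ ⟨v, rfl⟩
    have h1 : ExteriorAlgebra.ι ℝ m * ExteriorAlgebra.ι ℝ u
        = -(ExteriorAlgebra.ι ℝ u * ExteriorAlgebra.ι ℝ m) := by
      rw [eq_neg_iff_add_eq_zero]; exact ι_add_mul_swap m u
    have h2 : ExteriorAlgebra.ι ℝ m * ExteriorAlgebra.ι ℝ v
        = -(ExteriorAlgebra.ι ℝ v * ExteriorAlgebra.ι ℝ m) := by
      rw [eq_neg_iff_add_eq_zero]; exact ι_add_mul_swap m v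
    calc ExteriorAlgebra.ι ℝ m * (ExteriorAlgebra.ι ℝ u * ExteriorAlgebra.ι ℝ v)
        = (ExteriorAlgebra.ι ℝ m * ExteriorAlgebra.ι ℝ u) * ExteriorAlgebra.ι ℝ v := by
          noncomm_ring
      _ = -(ExteriorAlgebra.ι ℝ u * (ExteriorAlgebra.ι ℝ m * ExteriorAlgebra.ι ℝ v)) := by
          rw [h1]; noncomm_ring
      _ = ExteriorAlgebra.ι ℝ u * ExteriorAlgebra.ι ℝ v * ExteriorAlgebra.ι ℝ m := by
          rw [h2]; noncomm_ring
  · intro x y ihx ihy; rw [mul_add, add_mul, ihx, ihy]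

variable (g : Module.Dual ℝ M)

local notation "D" => CliffordAlgebra.contractLeft (Q := (0 : QuadraticForm ℝ M)) g

private lemma aux_D_ι_ι (u v : M) :
    D (ExteriorAlgebra.ι ℝ u * ExteriorAlgebra.ι ℝ v)
      = g u • ExteriorAlgebra.ι ℝ v - g v • ExteriorAlgebra.ι ℝ u := by
  rw [CliffordAlgebra.contractLeft_ι_mul, CliffordAlgebra.contractLeft_ι,
    ← Algebra.commutes, ← Algebra.smul_def]

private lemma aux_D_mem {b : ExteriorAlgebra ℝ M}
    (hb : b ∈ (LinearMap.range (ExteriorAlgebra.ι ℝ : M →ₗ[ℝ] ExteriorAlgebra ℝ M)) ^ 2) :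
    D b ∈ LinearMap.range (ExteriorAlgebra.ι ℝ : M →ₗ[ℝ] ExteriorAlgebra ℝ M) := by
  rw [pow_two] at hb
  refine Submodule.mul_induction_on hb ?_ ?_
  · rintro _ ⟨u, rfl⟩ _ ⟨v, rfl⟩
    rw [aux_D_ι_ι]
    exact Submodule.sub_mem _ (Submodule.smul_mem _ _ ⟨v, rfl⟩) (Submodule.smul_mem _ _ ⟨u, rfl⟩)
  · intro x y ihx ihy
    rw [map_add]; exact Submodule.add_mem _ ihx ihy

private lemma aux_D_mul {b : ExteriorAlgebra ℝ M}
    (hb : b ∈ (LinearMap.range (ExteriorAlgebra.ι ℝ : M →ₗ[ℝ] ExteriorAlgebra ℝ M)) ^ 2)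
    (y : ExteriorAlgebra ℝ M) :
    D (b * y) = D b * y + b * D y := by
  rw [pow_two] at hb
  revert y
  refine Submodule.mul_induction_on hb ?_ ?_
  · rintro _ ⟨u, rfl⟩ _ ⟨v, rfl⟩ y
    rw [mul_assoc, CliffordAlgebra.contractLeft_ι_mul, CliffordAlgebra.contractLeft_ι_mul,
      aux_D_ι_ι]
    simp only [mul_sub, sub_mul, smul_mul_assoc, mul_smul_comm, smul_sub, mul_assoc]
    abel
  · intro x y ihx ihy z
    simp only [add_mul, map_add, ihx, ihy]
    abel

end AuxForPowSucc

/-- Pointwise linear-algebra content of: if a 1-form `γ` satisfies `γ ∧ (dγ)^{k+1} = 0`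
identically, then `(dγ)^{k+2} = 0` identically. For a nonzero vector `a` of an ℝ-vector
space `M` (representing the 1-form as a degree-one element of the exterior algebra of the
dual) and a degree-two element `b` of the exterior algebra, `ι(a) * b^{k+1} = 0` implies
`b^{k+2} = 0`. -/
theorem pow_succ_eq_zero_of_one_form_mul_pow_eq_zero
    {M : Type*} [AddCommGroup M] [Module ℝ M]
    (a : M) (ha : a ≠ 0) (k : ℕ)
    (b : ExteriorAlgebra ℝ M)
    (hb : b ∈ (LinearMap.range (ExteriorAlgebra.ι ℝ : M →ₗ[ℝ] ExteriorAlgebra ℝ M)) ^ 2)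
    (hab : ExteriorAlgebra.ι ℝ a * b ^ (k + 1) = 0) :
    b ^ (k + 2) = 0 := by
  -- get a dual functional with `g a = 1`
  obtain ⟨f, hf⟩ : ∃ f : Module.Dual ℝ M, f a ≠ 0 := by
    by_contra h
    push_neg at h
    exact ha ((Module.forall_dual_apply_eq_zero_iff ℝ a).mp h)
  set g : Module.Dual ℝ M := (f a)⁻¹ • f with hg
  have hga : g a = 1 := by simp [hg, inv_mul_cancel₀ hf]
  set D : ExteriorAlgebra ℝ M →ₗ[ℝ] ExteriorAlgebra ℝ M :=
    CliffordAlgebra.contractLeft (Q := (0 : QuadraticForm ℝ M)) g with hD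
  obtain ⟨m, hm⟩ := aux_D_mem g hb
  -- contraction of powers of `b`
  have hpow : ∀ n : ℕ, D (b ^ (n + 1)) = (n + 1) • (ExteriorAlgebra.ι ℝ m * b ^ n) := by
    intro n
    induction n with
    | zero => simp [hD, ← hm]
    | succ n ih =>
      have hstep : b ^ (n + 2) = b * b ^ (n + 1) := by rw [← pow_succ']
      have hc : b * (ExteriorAlgebra.ι ℝ m * b ^ n)
          = ExteriorAlgebra.ι ℝ m * b ^ (n + 1) := by
        rw [← mul_assoc, ← aux_comm m hb, mul_assoc, ← pow_succ']
      have hm' : D b = ExteriorAlgebra.ι ℝ m := hm.symm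
      rw [hstep, show D (b * b ^ (n + 1)) = D b * b ^ (n + 1) + b * D (b ^ (n + 1)) from
        aux_D_mul g hb _, ih, hm', mul_smul_comm, hc, succ_nsmul, succ_nsmul]
      rw [succ_nsmul]
      abel
  -- the key identity obtained by contracting the hypothesis
  have key : b ^ (k + 1)
      = (k + 1) • (ExteriorAlgebra.ι ℝ a * (ExteriorAlgebra.ι ℝ m * b ^ k)) := by
    have h0 : D (ExteriorAlgebra.ι ℝ a * b ^ (k + 1)) = 0 := by rw [hab, map_zero]
    rw [hD, CliffordAlgebra.contractLeft_ι_mul, ← hD, hga, one_smul, hpow k,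
      mul_smul_comm, sub_eq_zero] at h0
    exact h0
  -- `ι a` appears twice, so the product vanishes
  have hz : ∀ y : ExteriorAlgebra ℝ M,
      ExteriorAlgebra.ι ℝ a * (ExteriorAlgebra.ι ℝ m * (ExteriorAlgebra.ι ℝ a * y)) = 0 := by
    intro y
    have h1 : ExteriorAlgebra.ι ℝ m * ExteriorAlgebra.ι ℝ a
        = -(ExteriorAlgebra.ι ℝ a * ExteriorAlgebra.ι ℝ m) := by
      rw [eq_neg_iff_add_eq_zero]; exact ι_add_mul_swap m a
    calc ExteriorAlgebra.ι ℝ a * (ExteriorAlgebra.ι ℝ m * (ExteriorAlgebra.ι ℝ a * y))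
        = ExteriorAlgebra.ι ℝ a * ((ExteriorAlgebra.ι ℝ m * ExteriorAlgebra.ι ℝ a) * y) := by
          noncomm_ring
      _ = -((ExteriorAlgebra.ι ℝ a * ExteriorAlgebra.ι ℝ a) *
            (ExteriorAlgebra.ι ℝ m * y)) := by rw [h1]; noncomm_ring
      _ = 0 := by rw [ι_sq_zero]; simp
  calc b ^ (k + 2) = b ^ (k + 1) * b := by rw [← pow_succ]
    _ = ((k + 1) • (ExteriorAlgebra.ι ℝ a * (ExteriorAlgebra.ι ℝ m * b ^ k))) * b := by
        conv_lhs => rw [key]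
    _ = (k + 1) • (ExteriorAlgebra.ι ℝ a * (ExteriorAlgebra.ι ℝ m * b ^ (k + 1))) := by
        rw [smul_mul_assoc, mul_assoc, mul_assoc, ← pow_succ]
    _ = (k + 1) • (ExteriorAlgebra.ι ℝ a * (ExteriorAlgebra.ι ℝ m *
          ((k + 1) • (ExteriorAlgebra.ι ℝ a * (ExteriorAlgebra.ι ℝ m * b ^ k))))) := by
        rw [key]
    _ = (k + 1) • ((k + 1) •
          (ExteriorAlgebra.ι ℝ a * (ExteriorAlgebra.ι ℝ m *
            (ExteriorAlgebra.ι ℝ a * (ExteriorAlgebra.ι ℝ m * b ^ k))))) := by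
        rw [mul_smul_comm, mul_smul_comm]
    _ = 0 := by rw [hz]; simp
end

section
/- Let V be a real vector space, α a nonzero alternating 1-form and β an alternating 2-form on V. If κ := ker α and the restriction of β to κ has kernel h := {v ∈ κ : β(v,w) = 0 for all w ∈ κ}, then h has even codimension in κ; in particular, if α ∧ β^k ≠ 0 and α ∧ β^{k+1} = 0, the restriction of β to κ has rank exactly 2k, so h has codimension 2k in κ. -/
/-!
Because `β` is alternating, hyperbolic pairs `(eᵢ, fᵢ)` with `β(eᵢ, fᵢ) = 1` can be split off
`κ = ker α` one at a time, each lowering the dimension by two and leaving the radical `h`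
unchanged, until `β` vanishes on what is left; hence `dim κ = dim h + 2m`.

For the rank statement one shows `m = k`. Pick `v₀` with `α(v₀) = 1`. Expanding `β ∧ β^j` over
the pair that fills the slots of `β`, the form `α ∧ β^j` takes the value `j!` at
`(v₀, e₁, f₁, …, e_j, f_j)` for `j ≤ m`, so `α ∧ β^{k+1} = 0` forces `m ≤ k`. Conversely `α` and
`β` factor through a projection of `V` killing `h ∩ ker β(·, v₀)`, a subspace of codimension at
most `2m + 2`, so `α ∧ β^j` vanishes as soon as `2j + 1 > 2m + 2`; hence `k ≤ m`.
-/

open Module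

noncomputable section

variable {V : Type*} [AddCommGroup V] [Module ℝ V]

/-- Wedge product of real-valued alternating forms. -/
def wedgeA {a b : ℕ} (f : V [⋀^Fin a]→ₗ[ℝ] ℝ) (g : V [⋀^Fin b]→ₗ[ℝ] ℝ) :
    V [⋀^Fin (a + b)]→ₗ[ℝ] ℝ :=
  ((TensorProduct.lid ℝ ℝ).toLinearMap.compAlternatingMap (f.domCoprod g)).domDomCongr
    finSumFinEquiv

/-- Wedge powers `β^k` of an alternating 2-form `β`. -/
def bpowA (β : V [⋀^Fin 2]→ₗ[ℝ] ℝ) : (k : ℕ) → V [⋀^Fin (2 * k)]→ₗ[ℝ] ℝ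
  | 0 => AlternatingMap.constOfIsEmpty ℝ V (Fin 0) 1
  | k + 1 => (wedgeA β (bpowA β k)).domDomCongr (finCongr (by omega))

section Symplectic

variable {K E : Type*} [Field K] [AddCommGroup E] [Module K E]

theorem Submodule.finrank_eq_finrank_inf_ker_add_finrank_map [FiniteDimensional K E]
    {W : Type*} [AddCommGroup W] [Module K W] (p : Submodule K E) (f : E →ₗ[K] W) :
    finrank K p = finrank K ↥(p ⊓ LinearMap.ker f) + finrank K ↥(p.map f) := by
  rw [← LinearMap.range_domRestrict, ← (f.domRestrict p).finrank_range_add_finrank_ker, add_comm,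
    LinearMap.ker_domRestrict, ← Submodule.map_comap_subtype, Submodule.finrank_map_subtype_eq]

theorem Submodule.finrank_le_finrank_inf_ker_add_one [FiniteDimensional K E] (p : Submodule K E)
    (f : Module.Dual K E) :
    finrank K p ≤ finrank K ↥(p ⊓ LinearMap.ker f) + 1 := by
  have hmap := (p.map f).finrank_le
  rw [finrank_self] at hmap
  rw [p.finrank_eq_finrank_inf_ker_add_finrank_map f]
  omega

namespace LinearMap.BilinForm

structure IsSymplecticFamily (B : LinearMap.BilinForm K E) {m : ℕ} (p : Fin m → Fin 2 → E) :
    Prop where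
  apply_pair : ∀ i, B (p i 0) (p i 1) = 1
  apply_of_ne : ∀ ⦃i j⦄, i ≠ j → ∀ s t, B (p i s) (p j t) = 0

variable {B : LinearMap.BilinForm K E}

theorem IsSymplecticFamily.comp {m n : ℕ} {p : Fin m → Fin 2 → E} (hp : B.IsSymplecticFamily p)
    {f : Fin n → Fin m} (hf : Function.Injective f) : B.IsSymplecticFamily (p ∘ f) :=
  ⟨fun i => hp.apply_pair (f i), fun _ _ hij => hp.apply_of_ne (hf.ne hij)⟩

section HyperbolicPair

variable (hB : LinearMap.IsAlt B) {κ : Submodule K E} {u w : E} (hu : u ∈ κ) (hw : w ∈ κ)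
  (huw : B u w = 1)
include hB hu hw huw

theorem finrank_eq_finrank_inf_ker_prod_flip_add_two [FiniteDimensional K E] :
    finrank K κ = finrank K ↥(κ ⊓ LinearMap.ker ((B.flip u).prod (B.flip w))) + 2 := by
  have hsurj : κ.map ((B.flip u).prod (B.flip w)) = ⊤ := by
    refine eq_top_iff.mpr fun ⟨a, b⟩ _ => ⟨b • u - a • w, κ.sub_mem (κ.smul_mem _ hu)
      (κ.smul_mem _ hw), ?_⟩
    have hwu : B w u = -1 := by rw [← hB.neg, huw]
    simp [hB.self_eq_zero u, hB.self_eq_zero w, huw, hwu]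
  rw [κ.finrank_eq_finrank_inf_ker_add_finrank_map ((B.flip u).prod (B.flip w)), hsurj,
    finrank_top, finrank_prod, finrank_self]

theorem inf_ker_prod_flip_inf_orthogonal_eq :
    κ ⊓ LinearMap.ker ((B.flip u).prod (B.flip w)) ⊓
        B.orthogonal (κ ⊓ LinearMap.ker ((B.flip u).prod (B.flip w))) =
      κ ⊓ B.orthogonal κ := by
  have mem_ker : ∀ v, v ∈ LinearMap.ker ((B.flip u).prod (B.flip w)) ↔ B v u = 0 ∧ B v w = 0 := by
    simp
  ext v
  simp only [Submodule.mem_inf, mem_orthogonal_iff, mem_ker]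
  constructor
  · rintro ⟨⟨hv, hvu, hvw⟩, hv'⟩
    refine ⟨hv, fun y hy => ?_⟩
    -- `y` differs from a vector orthogonal to `u` and `w` by a combination of `u` and `w`
    have hy' := hv' (y + B y u • w - B y w • u) ⟨κ.sub_mem (κ.add_mem hy (κ.smul_mem _ hw))
      (κ.smul_mem _ hu), by simp [hB.self_eq_zero u, hB.self_eq_zero w, huw, ← hB.neg u w]⟩
    simpa [hB.eq_iff.mp hvu, hB.eq_iff.mp hvw] using hy'
  · rintro ⟨hv, hv'⟩
    exact ⟨⟨hv, hB.eq_iff.mp (hv' u hu), hB.eq_iff.mp (hv' w hw)⟩, fun y hy => hv' y hy.1⟩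

end HyperbolicPair

theorem exists_isSymplecticFamily_finrank_eq [FiniteDimensional K E] (hB : LinearMap.IsAlt B)
    (κ : Submodule K E) :
    ∃ (m : ℕ) (p : Fin m → Fin 2 → E), (∀ i s, p i s ∈ κ) ∧ B.IsSymplecticFamily p ∧
      finrank K κ = finrank K ↥(κ ⊓ B.orthogonal κ) + 2 * m := by
  induction hn : finrank K κ using Nat.strong_induction_on generalizing κ with
  | _ n ih =>
  by_cases hrad : κ ≤ B.orthogonal κ
  · exact ⟨0, Fin.elim0, fun i => i.elim0, ⟨fun i => i.elim0, fun i => i.elim0⟩, by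
      rw [inf_eq_left.mpr hrad, hn, mul_zero, add_zero]⟩
  obtain ⟨v, hv, hvrad⟩ := Set.not_subset.mp hrad
  obtain ⟨u, hu, huv⟩ : ∃ u ∈ κ, B u v ≠ 0 := by
    simpa [mem_orthogonal_iff] using hvrad
  set w := (B u v)⁻¹ • v
  have hw : w ∈ κ := κ.smul_mem _ hv
  have huw : B u w = 1 := by simp [w, huv]
  have hdim := finrank_eq_finrank_inf_ker_prod_flip_add_two hB hu hw huw
  set κ' := κ ⊓ LinearMap.ker ((B.flip u).prod (B.flip w))
  obtain ⟨m, p, hpκ', hp, hdim'⟩ := ih (finrank K κ') (by omega) κ' rfl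
  have horth : ∀ x ∈ κ', ∀ s, B x (![u, w] s) = 0 := by
    intro x hx s
    have hx' : B x u = 0 ∧ B x w = 0 := by simpa using (Submodule.mem_inf.mp hx).2
    fin_cases s
    exacts [hx'.1, hx'.2]
  refine ⟨m + 1, Fin.cons ![u, w] p, ?_, ⟨?_, ?_⟩, ?_⟩
  · refine Fin.cases ?_ fun i => ?_ <;> intro s
    · fin_cases s <;> assumption
    · exact (hpκ' i s).1
  · exact Fin.cases huw hp.apply_pair
  · refine Fin.cases (Fin.cases ?_ fun j _ s t => ?_) fun i => Fin.cases ?_ fun j hij => ?_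
    · exact absurd rfl
    · exact hB.eq_iff.mp (horth _ (hpκ' j t) s)
    · exact fun _ s t => horth _ (hpκ' i s) t
    · exact hp.apply_of_ne (fun h => hij (congrArg Fin.succ h))
  · rw [← hn, hdim, hdim', inf_ker_prod_flip_inf_orthogonal_eq hB hu hw huw]
    ring

theorem inf_orthogonal_ker_inf_ker_flip_le (hB : LinearMap.IsAlt B) {L : Module.Dual K E}
    {v₀ : E} (hv₀ : L v₀ = 1) :
    LinearMap.ker L ⊓ B.orthogonal (LinearMap.ker L) ⊓ LinearMap.ker (B.flip v₀) ≤
      LinearMap.ker L ⊓ LinearMap.ker B ⊓ LinearMap.ker B.flip := by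
  rintro z ⟨⟨hzL : L z = 0, hz : ∀ n ∈ LinearMap.ker L, B n z = 0⟩, hzv₀ : B z v₀ = 0⟩
  -- every `w` is `L w • v₀` plus a vector of `ker L`
  have hwz : ∀ w, B w z = 0 := fun w => by
    simpa [hB.eq_iff.mp hzv₀] using hz (w - L w • v₀) (by simp [hv₀])
  exact ⟨⟨hzL, LinearMap.ext fun w => hB.eq_iff.mp (hwz w)⟩, LinearMap.ext hwz⟩

end LinearMap.BilinForm

end Symplectic

section Shuffles

open Equiv

theorem Equiv.Perm.modSumCongr_mk_eq_mk_iff {α β : Type*} [Finite α] [Finite β]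
    (σ τ : Perm (α ⊕ β)) :
    (Quotient.mk'' σ : Perm.ModSumCongr α β) = Quotient.mk'' τ ↔
      Set.MapsTo (σ⁻¹ * τ) (Set.range Sum.inl) (Set.range Sum.inl) := by
  refine ⟨fun h => ?_, fun h => QuotientGroup.eq.mpr (mem_sumCongrHom_range_of_perm_mapsTo_inl h)⟩
  obtain ⟨⟨πa, πb⟩, hπ⟩ := QuotientGroup.eq.mp h
  rw [← hπ]
  rintro _ ⟨a, rfl⟩
  exact ⟨πa a, rfl⟩

variable {R M M' : Type*} [CommRing R] [AddCommGroup M] [Module R M] [AddCommGroup M']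
  [Module R M'] {ιa ιb : Type*} [Fintype ιa] [Fintype ιb] [DecidableEq ιa] [DecidableEq ιb]

theorem AlternatingMap.domCoprod_compLinearMap (f : M [⋀^ιa]→ₗ[R] R) (g : M [⋀^ιb]→ₗ[R] R)
    (P : M' →ₗ[R] M) :
    (f.compLinearMap P).domCoprod (g.compLinearMap P) = (f.domCoprod g).compLinearMap P := by
  ext x
  simp only [AlternatingMap.domCoprod_apply, sum_apply, AlternatingMap.compLinearMap_apply]
  refine Finset.sum_congr rfl fun c _ => ?_
  induction c using Quotient.inductionOn'
  simp [AlternatingMap.domCoprod.summand_mk'']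

theorem AlternatingMap.lid_domCoprod_apply (f : M [⋀^ιa]→ₗ[R] R) (g : M [⋀^ιb]→ₗ[R] R)
    (x : ιa ⊕ ιb → M) :
    TensorProduct.lid R R (f.domCoprod g x) =
      ∑ c, TensorProduct.lid R R (AlternatingMap.domCoprod.summand f g c x) := by
  rw [AlternatingMap.domCoprod_apply, sum_apply, map_sum]

theorem AlternatingMap.lid_domCoprod_summand_mk (f : M [⋀^ιa]→ₗ[R] R) (g : M [⋀^ιb]→ₗ[R] R)
    (σ : Perm (ιa ⊕ ιb)) (x : ιa ⊕ ιb → M) :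
    TensorProduct.lid R R (AlternatingMap.domCoprod.summand f g (Quotient.mk'' σ) x) =
      Perm.sign σ • (f (fun i => x (σ (Sum.inl i))) * g (fun i => x (σ (Sum.inr i)))) := by
  simp [AlternatingMap.domCoprod.summand_mk'']

end Shuffles

theorem AlternatingMap.eq_zero_of_compLinearMap_eq {K M N ι : Type*} [Field K] [AddCommGroup M]
    [Module K M] [FiniteDimensional K M] [AddCommGroup N] [Module K N] [Fintype ι]
    (f : M [⋀^ι]→ₗ[K] N) (P : M →ₗ[K] M) (hf : f.compLinearMap P = f)
    (hP : finrank K (LinearMap.range P) < Fintype.card ι) : f = 0 := by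
  ext y
  rw [← hf, AlternatingMap.compLinearMap_apply, AlternatingMap.zero_apply]
  refine f.map_linearDependent _ fun hli => hP.not_ge ?_
  exact (LinearIndependent.of_comp (LinearMap.range P).subtype
    (v := fun i => ⟨P (y i), LinearMap.mem_range_self P _⟩) hli).fintype_card_le_finrank

section Wedge

open Equiv

theorem wedgeA_apply {a b : ℕ} (f : V [⋀^Fin a]→ₗ[ℝ] ℝ) (g : V [⋀^Fin b]→ₗ[ℝ] ℝ)
    (y : Fin (a + b) → V) :
    wedgeA f g y = TensorProduct.lid ℝ ℝ (f.domCoprod g (y ∘ finSumFinEquiv)) :=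
  rfl

theorem wedgeA_compLinearMap {W : Type*} [AddCommGroup W] [Module ℝ W] {a b : ℕ}
    (f : V [⋀^Fin a]→ₗ[ℝ] ℝ) (g : V [⋀^Fin b]→ₗ[ℝ] ℝ) (P : W →ₗ[ℝ] V) :
    wedgeA (f.compLinearMap P) (g.compLinearMap P) = (wedgeA f g).compLinearMap P := by
  ext y
  simp only [wedgeA_apply, AlternatingMap.domCoprod_compLinearMap]
  rfl

theorem bpowA_compLinearMap {W : Type*} [AddCommGroup W] [Module ℝ W]
    (β : V [⋀^Fin 2]→ₗ[ℝ] ℝ) (P : W →ₗ[ℝ] V) (k : ℕ) :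
    bpowA (β.compLinearMap P) k = (bpowA β k).compLinearMap P := by
  induction k with
  | zero => ext y; simp [bpowA]
  | succ k ih =>
    ext y
    simp only [bpowA, ih, wedgeA_compLinearMap]
    rfl

theorem wedgeA_bpowA_eq_zero_of_compLinearMap_eq [FiniteDimensional ℝ V]
    (α : V [⋀^Fin 1]→ₗ[ℝ] ℝ) (β : V [⋀^Fin 2]→ₗ[ℝ] ℝ) (P : V →ₗ[ℝ] V)
    (hα : α.compLinearMap P = α) (hβ : β.compLinearMap P = β) {k : ℕ}
    (hP : finrank ℝ (LinearMap.range P) < 1 + 2 * k) : wedgeA α (bpowA β k) = 0 := by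
  refine AlternatingMap.eq_zero_of_compLinearMap_eq _ P ?_ (by simpa using hP)
  rw [← wedgeA_compLinearMap, ← bpowA_compLinearMap, hα, hβ]

theorem wedgeA_apply_append_of_forall_eq_zero {b : ℕ} (f : V [⋀^Fin 1]→ₗ[ℝ] ℝ)
    (g : V [⋀^Fin b]→ₗ[ℝ] ℝ) (v : V) (y : Fin b → V) (hy : ∀ i, f ![y i] = 0) :
    wedgeA f g (Fin.append ![v] y) = f ![v] * g y := by
  have hx : Fin.append ![v] y ∘ finSumFinEquiv = Sum.elim ![v] y := by
    ext (i | i) <;> simp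
  rw [wedgeA_apply, hx, AlternatingMap.lid_domCoprod_apply]
  refine (Fintype.sum_eq_single (Quotient.mk'' 1) fun c hc => ?_).trans
    (by simp [AlternatingMap.lid_domCoprod_summand_mk, Matrix.vec_single_eq_const])
  induction c using Quotient.inductionOn' with | h σ => ?_
  rw [AlternatingMap.lid_domCoprod_summand_mk]
  -- a shuffle keeping the slot of `v` in the first block is trivial
  obtain ⟨i, hi⟩ : ∃ i, σ (Sum.inl 0) = Sum.inr i := by
    rcases hσ : σ (Sum.inl 0) with j | i
    · refine absurd ((Perm.modSumCongr_mk_eq_mk_iff 1 σ).mpr ?_).symm hc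
      rintro _ ⟨j', rfl⟩
      exact ⟨j, by rw [Subsingleton.elim j' 0, inv_one, one_mul, hσ]⟩
    · exact ⟨i, rfl⟩
  have hv : (fun j : Fin 1 => Sum.elim ![v] y (σ (Sum.inl j))) = ![y i] := by
    ext j
    simp [Subsingleton.elim j 0, hi]
  simp [hv, hy]

variable {α : V [⋀^Fin 1]→ₗ[ℝ] ℝ} {β : V [⋀^Fin 2]→ₗ[ℝ] ℝ} {L : Module.Dual ℝ V}
  {B : LinearMap.BilinForm ℝ V}

theorem apply_eq_apply_zero_of_forall (hL : ∀ v, L v = α ![v]) (y : Fin 1 → V) :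
    α y = L (y 0) := by
  rw [hL, Matrix.vec_single_eq_const]
  congr 1
  ext i
  rw [Subsingleton.elim i 0]

theorem apply_eq_apply_zero_one_of_forall (hB : ∀ v w, B v w = β ![v, w]) (y : Fin 2 → V) :
    β y = B (y 0) (y 1) := by
  rw [hB]
  congr 1
  ext i
  fin_cases i <;> rfl

theorem wedgeA_bpowA_eq_zero_of_finrank_lt [FiniteDimensional ℝ V] (hL : ∀ v, L v = α ![v])
    (hB : ∀ v w, B v w = β ![v, w]) {N : Submodule ℝ V}
    (hN : N ≤ LinearMap.ker L ⊓ LinearMap.ker B ⊓ LinearMap.ker B.flip) {k : ℕ}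
    (hk : finrank ℝ V < finrank ℝ N + (1 + 2 * k)) : wedgeA α (bpowA β k) = 0 := by
  obtain ⟨C, hC⟩ := N.exists_isCompl
  set P := C.projection N hC.symm
  have hP : ∀ v, ∃ z ∈ N, v = P v + z := fun v =>
    ⟨_, Submodule.projection_apply_mem _ _, (Submodule.projection_add_projection_eq_self _ v).symm⟩
  refine wedgeA_bpowA_eq_zero_of_compLinearMap_eq α β P (AlternatingMap.ext fun y => ?_)
    (AlternatingMap.ext fun y => ?_) ?_
  · rw [AlternatingMap.compLinearMap_apply, apply_eq_apply_zero_of_forall hL,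
      apply_eq_apply_zero_of_forall hL]
    obtain ⟨z, hz, hyz⟩ := hP (y 0)
    conv_rhs => rw [hyz]
    rw [map_add, LinearMap.mem_ker.mp (hN hz).1.1, add_zero]
  · rw [AlternatingMap.compLinearMap_apply, apply_eq_apply_zero_one_of_forall hB,
      apply_eq_apply_zero_one_of_forall hB]
    obtain ⟨z, hz, hyz⟩ := hP (y 0)
    obtain ⟨z', hz', hyz'⟩ := hP (y 1)
    have hzB : B z = 0 := (hN hz).1.2
    have hz'B : ∀ x, B x z' = 0 := LinearMap.congr_fun (hN hz').2
    conv_rhs => rw [hyz, hyz']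
    simp [hzB, hz'B]
  · have := Submodule.finrank_add_eq_of_isCompl hC
    rw [Submodule.range_projection]
    omega

end Wedge

section PairFrames

open Equiv

/-- Position `2 * i + s` of a `2n`-tuple holds the `s`-th vector of the `i`-th pair. -/
def finTwoMulEquiv (n : ℕ) : Fin (2 * n) ≃ Fin n × Fin 2 :=
  (finCongr (Nat.mul_comm 2 n)).trans finProdFinEquiv.symm

def finSumFinTwoMulEquiv (n : ℕ) : Fin 2 ⊕ Fin (2 * n) ≃ Fin (n + 1) × Fin 2 :=
  finSumFinEquiv.trans ((finCongr (by omega)).trans (finTwoMulEquiv (n + 1)))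

theorem finSumFinTwoMulEquiv_inl (n : ℕ) (s : Fin 2) :
    finSumFinTwoMulEquiv n (Sum.inl s) = (0, s) := by
  ext <;> simp [finSumFinTwoMulEquiv, finTwoMulEquiv] <;> omega

theorem finSumFinTwoMulEquiv_inr (n : ℕ) (j : Fin (2 * n)) :
    finSumFinTwoMulEquiv n (Sum.inr j) = Prod.map Fin.succ id (finTwoMulEquiv n j) := by
  ext <;> simp [finSumFinTwoMulEquiv, finTwoMulEquiv]

theorem bpowA_succ_apply (β : V [⋀^Fin 2]→ₗ[ℝ] ℝ) (n : ℕ) (y : Fin (n + 1) × Fin 2 → V) :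
    bpowA β (n + 1) (y ∘ finTwoMulEquiv (n + 1)) =
      TensorProduct.lid ℝ ℝ (β.domCoprod (bpowA β n) (y ∘ finSumFinTwoMulEquiv n)) :=
  rfl

/-- The shuffle exchanging the pair in the slots of `β` with the `t`-th pair. At a symplectic
frame, these represent all the shuffles contributing to `β ∧ β^n`. -/
def blockSwap {n : ℕ} (t : Fin (n + 1)) : Perm (Fin 2 ⊕ Fin (2 * n)) :=
  (finSumFinTwoMulEquiv n).symm.permCongr (prodCongrLeft fun _ => swap 0 t)

theorem finSumFinTwoMulEquiv_blockSwap {n : ℕ} (t : Fin (n + 1)) (z : Fin 2 ⊕ Fin (2 * n)) :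
    finSumFinTwoMulEquiv n (blockSwap t z) =
      prodCongrLeft (fun _ => swap 0 t) (finSumFinTwoMulEquiv n z) := by
  simp [blockSwap]

theorem uncurry_finSumFinTwoMulEquiv_blockSwap {X : Type*} {n : ℕ} (p : Fin (n + 1) → Fin 2 → X)
    (t : Fin (n + 1)) (z : Fin 2 ⊕ Fin (2 * n)) :
    Function.uncurry p (finSumFinTwoMulEquiv n (blockSwap t z)) =
      Function.uncurry (p ∘ swap 0 t) (finSumFinTwoMulEquiv n z) := by
  rw [finSumFinTwoMulEquiv_blockSwap]
  obtain ⟨i, s⟩ := finSumFinTwoMulEquiv n z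
  rfl

theorem sign_blockSwap {n : ℕ} (t : Fin (n + 1)) : Perm.sign (blockSwap (n := n) t) = 1 := by
  rw [blockSwap, Perm.sign_permCongr, Perm.sign_prodCongrLeft, Fin.prod_univ_two,
    Int.units_mul_self]

theorem blockSwap_inv {n : ℕ} (t : Fin (n + 1)) : (blockSwap t)⁻¹ = blockSwap t := by
  refine inv_eq_of_mul_eq_one_right (Perm.ext fun z => (finSumFinTwoMulEquiv n).injective ?_)
  rw [Perm.mul_apply, Perm.one_apply, finSumFinTwoMulEquiv_blockSwap,
    finSumFinTwoMulEquiv_blockSwap]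
  obtain ⟨i, s⟩ := finSumFinTwoMulEquiv n z
  simp

theorem mk_blockSwap_injective (n : ℕ) :
    Function.Injective fun t : Fin (n + 1) =>
      (Quotient.mk'' (blockSwap t) : Perm.ModSumCongr (Fin 2) (Fin (2 * n))) := by
  intro s t hst
  obtain ⟨z, hz⟩ := (Perm.modSumCongr_mk_eq_mk_iff _ _).mp hst ⟨0, rfl⟩
  have := congrArg (fun z => (finSumFinTwoMulEquiv n z).1) hz
  simp only [blockSwap_inv, Perm.coe_mul, Function.comp_apply, finSumFinTwoMulEquiv_blockSwap,
    finSumFinTwoMulEquiv_inl, prodCongrLeft_apply, swap_apply_left] at this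
  rw [eq_comm, swap_apply_eq_iff, swap_apply_left] at this
  exact this.symm

variable {α : V [⋀^Fin 1]→ₗ[ℝ] ℝ} {β : V [⋀^Fin 2]→ₗ[ℝ] ℝ} {L : Module.Dual ℝ V}
  {B : LinearMap.BilinForm ℝ V}

theorem lid_domCoprod_summand_blockSwap (hB : ∀ v w, B v w = β ![v, w]) {n : ℕ}
    {p : Fin (n + 1) → Fin 2 → V} (hp : B.IsSymplecticFamily p) (t : Fin (n + 1)) :
    TensorProduct.lid ℝ ℝ (AlternatingMap.domCoprod.summand β (bpowA β n)
        (Quotient.mk'' (blockSwap t)) (Function.uncurry p ∘ finSumFinTwoMulEquiv n)) =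
      bpowA β n (Function.uncurry (Fin.tail (p ∘ swap 0 t)) ∘ finTwoMulEquiv n) := by
  rw [AlternatingMap.lid_domCoprod_summand_mk, sign_blockSwap, one_smul]
  simp only [Function.comp_apply, uncurry_finSumFinTwoMulEquiv_blockSwap,
    finSumFinTwoMulEquiv_inl, finSumFinTwoMulEquiv_inr]
  rw [apply_eq_apply_zero_one_of_forall hB]
  simp only [Function.uncurry_apply_pair, Function.comp_apply, swap_apply_left, hp.apply_pair t,
    one_mul]
  rfl

theorem mk_eq_mk_blockSwap_of_ne_zero (hB : ∀ v w, B v w = β ![v, w]) {n : ℕ}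
    {p : Fin (n + 1) → Fin 2 → V} (hp : B.IsSymplecticFamily p) (σ : Perm (Fin 2 ⊕ Fin (2 * n)))
    (hσ : β (fun s => Function.uncurry p (finSumFinTwoMulEquiv n (σ (Sum.inl s)))) ≠ 0) :
    (Quotient.mk'' σ : Perm.ModSumCongr (Fin 2) (Fin (2 * n))) =
      Quotient.mk'' (blockSwap (finSumFinTwoMulEquiv n (σ (Sum.inl 0))).1) := by
  set E := finSumFinTwoMulEquiv n
  set t := (E (σ (Sum.inl 0))).1
  have hblock : ∀ s, (E (σ (Sum.inl s))).1 = t := by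
    rw [apply_eq_apply_zero_one_of_forall hB] at hσ
    refine Fin.forall_fin_two.mpr ⟨rfl, by_contra fun h => hσ ?_⟩
    exact hp.apply_of_ne (Ne.symm h) _ _
  refine ((Perm.modSumCongr_mk_eq_mk_iff _ _).mpr ?_).symm
  rintro _ ⟨s, rfl⟩
  refine ⟨(E (σ (Sum.inl s))).2, E.injective ?_⟩
  rw [blockSwap_inv, Perm.mul_apply, finSumFinTwoMulEquiv_blockSwap, finSumFinTwoMulEquiv_inl,
    ← hblock s]
  obtain ⟨i, s'⟩ := E (σ (Sum.inl s))
  simp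

theorem bpowA_apply_uncurry_comp_finTwoMulEquiv (hB : ∀ v w, B v w = β ![v, w]) :
    ∀ {n : ℕ} {p : Fin n → Fin 2 → V}, B.IsSymplecticFamily p →
      bpowA β n (Function.uncurry p ∘ finTwoMulEquiv n) = n.factorial
  | 0, _, _ => by simp [bpowA]
  | n + 1, p, hp => by
    rw [bpowA_succ_apply, AlternatingMap.lid_domCoprod_apply]
    refine (Fintype.sum_of_injective _ (mk_blockSwap_injective n)
      (fun _ => (n.factorial : ℝ)) _ ?_ ?_).symm.trans ?_
    · intro c hc
      induction c using Quotient.inductionOn' with | h σ => ?_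
      rw [AlternatingMap.lid_domCoprod_summand_mk]
      by_cases hσ : β (fun s => Function.uncurry p (finSumFinTwoMulEquiv n (σ (Sum.inl s)))) = 0
      · simp [hσ]
      · exact absurd ⟨_, (mk_eq_mk_blockSwap_of_ne_zero hB hp σ hσ).symm⟩ hc
    · intro t
      rw [lid_domCoprod_summand_blockSwap hB hp]
      exact (bpowA_apply_uncurry_comp_finTwoMulEquiv hB (p := Fin.tail (p ∘ swap 0 t))
        ((hp.comp (swap 0 t).injective).comp (Fin.succ_injective _))).symm
    · simp [Nat.factorial_succ]

theorem wedgeA_bpowA_apply_append_uncurry (hL : ∀ v, L v = α ![v])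
    (hB : ∀ v w, B v w = β ![v, w]) {v₀ : V} (hv₀ : L v₀ = 1) {n : ℕ}
    {p : Fin n → Fin 2 → V} (hp : B.IsSymplecticFamily p) (hpL : ∀ i s, L (p i s) = 0) :
    wedgeA α (bpowA β n) (Fin.append ![v₀] (Function.uncurry p ∘ finTwoMulEquiv n)) =
      n.factorial := by
  rw [wedgeA_apply_append_of_forall_eq_zero _ _ _ (Function.uncurry p ∘ finTwoMulEquiv n)
    fun i => (hL _).symm.trans (hpL _ _), ← hL,
    hv₀, one_mul, bpowA_apply_uncurry_comp_finTwoMulEquiv hB hp]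

end PairFrames

/-- Let `α` be a nonzero alternating 1-form and `β` an alternating 2-form on `V`, with
`κ = ker α` and `h = {v ∈ κ : β(v,w) = 0 for all w ∈ κ}` the radical of `β|_κ`. Then `h`
has even codimension in `κ`; and if moreover `α ∧ β^k ≠ 0` and `α ∧ β^{k+1} = 0`, the
restriction of `β` to `κ` has rank exactly `2k`, i.e. `h` has codimension `2k` in `κ`. -/
theorem radical_even_codim_and_rank_two_k
    [FiniteDimensional ℝ V] (k : ℕ)
    (α : V [⋀^Fin 1]→ₗ[ℝ] ℝ) (β : V [⋀^Fin 2]→ₗ[ℝ] ℝ)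
    (L : Module.Dual ℝ V) (hL : ∀ v, L v = α ![v]) (hα : L ≠ 0)
    (B : LinearMap.BilinForm ℝ V) (hB : ∀ v w, B v w = β ![v, w])
    (κ : Submodule ℝ V) (hκ : κ = LinearMap.ker L)
    (h : Submodule ℝ V) (hh : h = κ ⊓ ⨅ w ∈ κ, LinearMap.ker (B.flip w)) :
    (∃ m : ℕ, finrank ℝ κ = finrank ℝ h + 2 * m) ∧
    (wedgeA α (bpowA β k) ≠ 0 → wedgeA α (bpowA β (k + 1)) = 0 →
      finrank ℝ κ = finrank ℝ h + 2 * k) := by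
  have hBalt : LinearMap.IsAlt B := fun v => by
    rw [hB]
    exact β.map_eq_zero_of_eq _ (i := 0) (j := 1) rfl (by decide)
  have hrad : h = κ ⊓ B.orthogonal κ := by
    ext v
    simp [hh, LinearMap.BilinForm.mem_orthogonal_iff, hBalt.eq_iff]
  obtain ⟨m, p, hpκ, hp, hdim⟩ := LinearMap.BilinForm.exists_isSymplecticFamily_finrank_eq hBalt κ
  subst hκ hrad
  refine ⟨⟨m, hdim⟩, fun hne hzero => ?_⟩
  obtain ⟨v₀, hv₀⟩ := LinearMap.surjective hα 1
  suffices m = k by rw [hdim, this]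
  refine le_antisymm (not_lt.mp fun hkm => ?_) (not_lt.mp fun hmk => hne ?_)
  · have hval := wedgeA_bpowA_apply_append_uncurry hL hB hv₀
      (hp.comp (Fin.castLE_injective hkm)) fun i s => hpκ _ s
    rw [hzero, AlternatingMap.zero_apply] at hval
    exact Nat.factorial_ne_zero _ (by exact_mod_cast hval.symm)
  · refine wedgeA_bpowA_eq_zero_of_finrank_lt hL hB
      (LinearMap.BilinForm.inf_orthogonal_ker_inf_ker_flip_le hBalt hv₀) ?_
    have := Module.Dual.finrank_ker_add_one_of_ne_zero hα
    have := (LinearMap.ker L ⊓ B.orthogonal (LinearMap.ker L)).finrank_le_finrank_inf_ker_add_one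
      (B.flip v₀)
    omega

end
end

section
/- Let (M₁, π₁) and (M₂, π₂) be Poisson manifolds with compactly supported Poisson bivectors, and let χᵢ : Mᵢ → [0,1] be smooth functions with χᵢ = 1 on supp(πᵢ). Then the bivector field Π = χ₂·π₁ + χ₁·π₂ on M₁ × M₂ (with pullbacks implicit) satisfies [Π, Π] = 0, i.e., Π is a Poisson structure; moreover Π = π₁ + π₂ on supp(π₁) × supp(π₂), and supp(Π) ⊆ (supp(π₁) × supp(χ₂)) ∪ (supp(χ₁) × supp(π₂)). -/
open scoped BigOperators

/-- Partial derivative `∂_l h` at `x`. -/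
noncomputable def pd {ι : Type*} [Fintype ι] [DecidableEq ι]
    (h : (ι → ℝ) → ℝ) (x : ι → ℝ) (l : ι) : ℝ :=
  fderiv ℝ h x (Pi.single l 1)

/-- Components of the Schouten bracket `[π,π]` (up to a factor 2) of a bivector field in
coordinates indexed by `ι`. -/
noncomputable def schoutenSq {ι : Type*} [Fintype ι] [DecidableEq ι]
    (π : (ι → ℝ) → ι → ι → ℝ) (x : ι → ℝ) (i j k : ι) : ℝ :=
  ∑ l, (π x l i * pd (fun y => π y j k) x l
      + π x l j * pd (fun y => π y k i) x l
      + π x l k * pd (fun y => π y i j) x l)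

lemma pd_mul_sides {n m : ℕ}
    (g₁ : (Fin n → ℝ) → ℝ) (g₂ : (Fin m → ℝ) → ℝ)
    (x : (Fin n ⊕ Fin m) → ℝ)
    (hg₁ : DifferentiableAt ℝ g₁ (x ∘ Sum.inl))
    (hg₂ : DifferentiableAt ℝ g₂ (x ∘ Sum.inr)) :
    (∀ l, pd (fun y => g₁ (y ∘ Sum.inl) * g₂ (y ∘ Sum.inr)) x (Sum.inl l)
        = g₂ (x ∘ Sum.inr) * pd g₁ (x ∘ Sum.inl) l) ∧
    (∀ l, pd (fun y => g₁ (y ∘ Sum.inl) * g₂ (y ∘ Sum.inr)) x (Sum.inr l)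
        = g₁ (x ∘ Sum.inl) * pd g₂ (x ∘ Sum.inr) l) := by
  set L1 : ((Fin n ⊕ Fin m) → ℝ) →L[ℝ] (Fin n → ℝ) :=
    ContinuousLinearMap.pi (fun i => ContinuousLinearMap.proj (Sum.inl i)) with hL1def
  set L2 : ((Fin n ⊕ Fin m) → ℝ) →L[ℝ] (Fin m → ℝ) :=
    ContinuousLinearMap.pi (fun i => ContinuousLinearMap.proj (Sum.inr i)) with hL2def
  have h1 : HasFDerivAt (fun y => g₁ (y ∘ Sum.inl))
      ((fderiv ℝ g₁ (x ∘ Sum.inl)).comp L1) x :=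
    hg₁.hasFDerivAt.comp x L1.hasFDerivAt
  have h2 : HasFDerivAt (fun y => g₂ (y ∘ Sum.inr))
      ((fderiv ℝ g₂ (x ∘ Sum.inr)).comp L2) x :=
    hg₂.hasFDerivAt.comp x L2.hasFDerivAt
  have H := h1.mul h2
  have hf : fderiv ℝ (fun y => g₁ (y ∘ Sum.inl) * g₂ (y ∘ Sum.inr)) x = _ := H.fderiv
  have e1 : ∀ l : Fin n, L1 (Pi.single (Sum.inl l) (1:ℝ)) = Pi.single l (1:ℝ) := by
    intro l; funext j
    simp [hL1def, Pi.single_apply]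
  have e2 : ∀ l : Fin n, L2 (Pi.single (Sum.inl l) (1:ℝ)) = 0 := by
    intro l; funext j
    simp [hL2def, Pi.single_apply]
  have e3 : ∀ l : Fin m, L1 (Pi.single (Sum.inr l) (1:ℝ)) = 0 := by
    intro l; funext j
    simp [hL1def, Pi.single_apply]
  have e4 : ∀ l : Fin m, L2 (Pi.single (Sum.inr l) (1:ℝ)) = Pi.single l (1:ℝ) := by
    intro l; funext j
    simp [hL2def, Pi.single_apply]
  constructor <;> intro l <;>
    simp only [pd, hf, ContinuousLinearMap.add_apply, ContinuousLinearMap.smul_apply,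
      ContinuousLinearMap.coe_comp', Function.comp_apply, smul_eq_mul]
  · rw [e1, e2, map_zero, mul_zero, zero_add]
  · rw [e3, e4, map_zero, mul_zero, add_zero]

lemma pd_zero_fun {ι : Type*} [Fintype ι] [DecidableEq ι]
    (x : ι → ℝ) (l : ι) : pd (fun _ : ι → ℝ => (0:ℝ)) x l = 0 := by
  simp [pd]

/-- Product of compactly supported Poisson structures: `Π = χ₂·π₁ + χ₁·π₂` is a Poisson
structure on `M₁ × M₂`, agrees with `π₁ + π₂` on `supp π₁ × supp π₂`, and is supported in
`(supp π₁ × supp χ₂) ∪ (supp χ₁ × supp π₂)`. -/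
theorem product_of_compactly_supported_poisson (n m : ℕ)
    (π₁ : (Fin n → ℝ) → Fin n → Fin n → ℝ)
    (π₂ : (Fin m → ℝ) → Fin m → Fin m → ℝ)
    (h1sm : ∀ j k, ContDiff ℝ (⊤ : ℕ∞) fun x => π₁ x j k)
    (h2sm : ∀ j k, ContDiff ℝ (⊤ : ℕ∞) fun x => π₂ x j k)
    (h1skew : ∀ x j k, π₁ x j k = - π₁ x k j)
    (h2skew : ∀ x j k, π₂ x j k = - π₂ x k j)
    (h1p : ∀ x i j k, schoutenSq π₁ x i j k = 0)
    (h2p : ∀ x i j k, schoutenSq π₂ x i j k = 0)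
    (S₁ : Set (Fin n → ℝ)) (hS₁ : S₁ = closure {x | ∃ j k, π₁ x j k ≠ 0})
    (S₂ : Set (Fin m → ℝ)) (hS₂ : S₂ = closure {x | ∃ j k, π₂ x j k ≠ 0})
    (hc₁ : IsCompact S₁) (hc₂ : IsCompact S₂)
    (χ₁ : (Fin n → ℝ) → ℝ) (χ₂ : (Fin m → ℝ) → ℝ)
    (hχ₁ : ContDiff ℝ (⊤ : ℕ∞) χ₁) (hχ₂ : ContDiff ℝ (⊤ : ℕ∞) χ₂)
    (hχ₁r : ∀ x, χ₁ x ∈ Set.Icc (0:ℝ) 1) (hχ₂r : ∀ x, χ₂ x ∈ Set.Icc (0:ℝ) 1)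
    (hχ₁1 : ∀ x ∈ S₁, χ₁ x = 1) (hχ₂1 : ∀ x ∈ S₂, χ₂ x = 1)
    (Pi' : ((Fin n ⊕ Fin m) → ℝ) → (Fin n ⊕ Fin m) → (Fin n ⊕ Fin m) → ℝ)
    (hPi : ∀ x : (Fin n ⊕ Fin m) → ℝ,
      (∀ j k, Pi' x (Sum.inl j) (Sum.inl k) = χ₂ (x ∘ Sum.inr) * π₁ (x ∘ Sum.inl) j k) ∧
      (∀ j k, Pi' x (Sum.inr j) (Sum.inr k) = χ₁ (x ∘ Sum.inl) * π₂ (x ∘ Sum.inr) j k) ∧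
      (∀ j k, Pi' x (Sum.inl j) (Sum.inr k) = 0) ∧
      (∀ j k, Pi' x (Sum.inr j) (Sum.inl k) = 0)) :
    (∀ x i j k, schoutenSq Pi' x i j k = 0) ∧
    (∀ x : (Fin n ⊕ Fin m) → ℝ, x ∘ Sum.inl ∈ S₁ → x ∘ Sum.inr ∈ S₂ →
      (∀ j k, Pi' x (Sum.inl j) (Sum.inl k) = π₁ (x ∘ Sum.inl) j k) ∧
      (∀ j k, Pi' x (Sum.inr j) (Sum.inr k) = π₂ (x ∘ Sum.inr) j k)) ∧
    closure {x | ∃ a b, Pi' x a b ≠ 0} ⊆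
      {x | x ∘ Sum.inl ∈ S₁ ∧ x ∘ Sum.inr ∈ tsupport χ₂} ∪
      {x | x ∘ Sum.inl ∈ tsupport χ₁ ∧ x ∘ Sum.inr ∈ S₂} := by
  refine ⟨?_, ?_, ?_⟩
  · -- Poisson condition
    intro x i j k
    obtain ⟨hll, hrr, hlr, hrl⟩ := hPi x
    set a := x ∘ Sum.inl with ha
    set b := x ∘ Sum.inr with hb
    -- derivatives of the components of Pi'
    have Dll : ∀ (j k : Fin n) (l : Fin n),
        pd (fun y => Pi' y (Sum.inl j) (Sum.inl k)) x (Sum.inl l)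
          = χ₂ b * pd (fun z => π₁ z j k) a l := by
      intro j k l
      have he : (fun y => Pi' y (Sum.inl j) (Sum.inl k))
          = fun y => (fun z => π₁ z j k) (y ∘ Sum.inl) * χ₂ (y ∘ Sum.inr) :=
        funext fun y => by rw [(hPi y).1]; ring
      rw [he]
      exact (pd_mul_sides _ _ x ((h1sm j k).differentiable (by simp) _)
        (hχ₂.differentiable (by simp) _)).1 l
    have Dlr : ∀ (j k : Fin n) (l : Fin m),
        pd (fun y => Pi' y (Sum.inl j) (Sum.inl k)) x (Sum.inr l)
          = π₁ a j k * pd χ₂ b l := by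
      intro j k l
      have he : (fun y => Pi' y (Sum.inl j) (Sum.inl k))
          = fun y => (fun z => π₁ z j k) (y ∘ Sum.inl) * χ₂ (y ∘ Sum.inr) :=
        funext fun y => by rw [(hPi y).1]; ring
      rw [he]
      exact (pd_mul_sides _ _ x ((h1sm j k).differentiable (by simp) _)
        (hχ₂.differentiable (by simp) _)).2 l
    have Drr : ∀ (j k : Fin m) (l : Fin m),
        pd (fun y => Pi' y (Sum.inr j) (Sum.inr k)) x (Sum.inr l)
          = χ₁ a * pd (fun z => π₂ z j k) b l := by
      intro j k l
      have he : (fun y => Pi' y (Sum.inr j) (Sum.inr k))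
          = fun y => χ₁ (y ∘ Sum.inl) * (fun z => π₂ z j k) (y ∘ Sum.inr) :=
        funext fun y => by rw [(hPi y).2.1]
      rw [he]
      exact (pd_mul_sides _ _ x (hχ₁.differentiable (by simp) _)
        ((h2sm j k).differentiable (by simp) _)).2 l
    have Drl : ∀ (j k : Fin m) (l : Fin n),
        pd (fun y => Pi' y (Sum.inr j) (Sum.inr k)) x (Sum.inl l)
          = π₂ b j k * pd χ₁ a l := by
      intro j k l
      have he : (fun y => Pi' y (Sum.inr j) (Sum.inr k))
          = fun y => χ₁ (y ∘ Sum.inl) * (fun z => π₂ z j k) (y ∘ Sum.inr) :=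
        funext fun y => by rw [(hPi y).2.1]
      rw [he]
      exact (pd_mul_sides _ _ x (hχ₁.differentiable (by simp) _)
        ((h2sm j k).differentiable (by simp) _)).1 l
    have Dm1 : ∀ (j : Fin n) (k : Fin m) (l : Fin n ⊕ Fin m),
        pd (fun y => Pi' y (Sum.inl j) (Sum.inr k)) x l = 0 := by
      intro j k l
      have he : (fun y => Pi' y (Sum.inl j) (Sum.inr k)) = fun _ => (0:ℝ) :=
        funext fun y => (hPi y).2.2.1 j k
      rw [he]; exact pd_zero_fun x l
    have Dm2 : ∀ (j : Fin m) (k : Fin n) (l : Fin n ⊕ Fin m),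
        pd (fun y => Pi' y (Sum.inr j) (Sum.inl k)) x l = 0 := by
      intro j k l
      have he : (fun y => Pi' y (Sum.inr j) (Sum.inl k)) = fun _ => (0:ℝ) :=
        funext fun y => (hPi y).2.2.2 j k
      rw [he]; exact pd_zero_fun x l
    -- Casimir property
    have Cas1 : ∀ (l k : Fin n), π₁ a l k * pd χ₁ a l = 0 := by
      intro l k
      by_cases h : π₁ a l k = 0
      · rw [h, zero_mul]
      · have haS : a ∈ S₁ := hS₁ ▸ subset_closure ⟨l, k, h⟩
        have hmax : IsLocalMax χ₁ a :=
          Filter.Eventually.of_forall fun y => by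
            rw [hχ₁1 a haS]; exact (hχ₁r y).2
        have : fderiv ℝ χ₁ a = 0 := hmax.fderiv_eq_zero
        rw [pd, this]; simp
    have Cas2 : ∀ (l k : Fin m), π₂ b l k * pd χ₂ b l = 0 := by
      intro l k
      by_cases h : π₂ b l k = 0
      · rw [h, zero_mul]
      · have hbS : b ∈ S₂ := hS₂ ▸ subset_closure ⟨l, k, h⟩
        have hmax : IsLocalMax χ₂ b :=
          Filter.Eventually.of_forall fun y => by
            rw [hχ₂1 b hbS]; exact (hχ₂r y).2
        have : fderiv ℝ χ₂ b = 0 := hmax.fderiv_eq_zero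
        rw [pd, this]; simp
    rcases i with i | i <;> rcases j with j | j <;> rcases k with k | k
    · -- LLL
      simp only [schoutenSq, Fintype.sum_sum_type, Dll, Dlr, hll, hrl,
        zero_mul, mul_zero, add_zero, zero_add, Finset.sum_const_zero]
      have h := h1p a i j k
      rw [schoutenSq] at h
      calc (∑ l, (χ₂ b * π₁ a l i * (χ₂ b * pd (fun z => π₁ z j k) a l)
              + χ₂ b * π₁ a l j * (χ₂ b * pd (fun z => π₁ z k i) a l)
              + χ₂ b * π₁ a l k * (χ₂ b * pd (fun z => π₁ z i j) a l)))
          = χ₂ b * χ₂ b * ∑ l, (π₁ a l i * pd (fun y => π₁ y j k) a l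
              + π₁ a l j * pd (fun y => π₁ y k i) a l
              + π₁ a l k * pd (fun y => π₁ y i j) a l) := by
            rw [Finset.mul_sum]
            exact Finset.sum_congr rfl fun l _ => by ring
        _ = 0 := by rw [h, mul_zero]
    · -- LLR
      simp only [schoutenSq, Fintype.sum_sum_type, Dm1, Dm2, hlr, hrl, hrr, Dlr,
        zero_mul, mul_zero, add_zero, zero_add, Finset.sum_const_zero]
      refine Finset.sum_eq_zero fun l _ => ?_
      linear_combination (χ₁ a * π₁ a i j) * Cas2 l k
    · -- LRL
      simp only [schoutenSq, Fintype.sum_sum_type, Dm1, Dm2, hlr, hrl, hrr, Dlr,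
        zero_mul, mul_zero, add_zero, zero_add, Finset.sum_const_zero]
      refine Finset.sum_eq_zero fun l _ => ?_
      linear_combination (χ₁ a * π₁ a k i) * Cas2 l j
    · -- LRR
      simp only [schoutenSq, Fintype.sum_sum_type, Dm1, Dm2, hlr, hrl, hll, Drl,
        zero_mul, mul_zero, add_zero, zero_add, Finset.sum_const_zero]
      refine Finset.sum_eq_zero fun l _ => ?_
      linear_combination (χ₂ b * π₂ b j k) * Cas1 l i
    · -- RLL
      simp only [schoutenSq, Fintype.sum_sum_type, Dm1, Dm2, hlr, hrl, hrr, Dlr,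
        zero_mul, mul_zero, add_zero, zero_add, Finset.sum_const_zero]
      refine Finset.sum_eq_zero fun l _ => ?_
      linear_combination (χ₁ a * π₁ a j k) * Cas2 l i
    · -- RLR
      simp only [schoutenSq, Fintype.sum_sum_type, Dm1, Dm2, hlr, hrl, hll, Drl,
        zero_mul, mul_zero, add_zero, zero_add, Finset.sum_const_zero]
      refine Finset.sum_eq_zero fun l _ => ?_
      linear_combination (χ₂ b * π₂ b k i) * Cas1 l j
    · -- RRL
      simp only [schoutenSq, Fintype.sum_sum_type, Dm1, Dm2, hlr, hrl, hll, Drl,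
        zero_mul, mul_zero, add_zero, zero_add, Finset.sum_const_zero]
      refine Finset.sum_eq_zero fun l _ => ?_
      linear_combination (χ₂ b * π₂ b i j) * Cas1 l k
    · -- RRR
      simp only [schoutenSq, Fintype.sum_sum_type, Drr, Drl, hrr, hlr,
        zero_mul, mul_zero, add_zero, zero_add, Finset.sum_const_zero]
      have h := h2p b i j k
      rw [schoutenSq] at h
      calc (∑ l, (χ₁ a * π₂ b l i * (χ₁ a * pd (fun z => π₂ z j k) b l)
              + χ₁ a * π₂ b l j * (χ₁ a * pd (fun z => π₂ z k i) b l)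
              + χ₁ a * π₂ b l k * (χ₁ a * pd (fun z => π₂ z i j) b l)))
          = χ₁ a * χ₁ a * ∑ l, (π₂ b l i * pd (fun y => π₂ y j k) b l
              + π₂ b l j * pd (fun y => π₂ y k i) b l
              + π₂ b l k * pd (fun y => π₂ y i j) b l) := by
            rw [Finset.mul_sum]
            exact Finset.sum_congr rfl fun l _ => by ring
        _ = 0 := by rw [h, mul_zero]
  · -- agreement on the product of supports
    intro x h1 h2
    refine ⟨fun j k => ?_, fun j k => ?_⟩
    · rw [(hPi x).1, hχ₂1 _ h2, one_mul]
    · rw [(hPi x).2.1, hχ₁1 _ h1, one_mul]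
  · -- support estimate
    have c1 : Continuous fun x : (Fin n ⊕ Fin m) → ℝ => x ∘ Sum.inl :=
      continuous_pi fun i => continuous_apply (Sum.inl i)
    have c2 : Continuous fun x : (Fin n ⊕ Fin m) → ℝ => x ∘ Sum.inr :=
      continuous_pi fun i => continuous_apply (Sum.inr i)
    have hS₁c : IsClosed S₁ := hS₁ ▸ isClosed_closure
    have hS₂c : IsClosed S₂ := hS₂ ▸ isClosed_closure
    refine closure_minimal ?_ ?_
    · rintro x ⟨a0, b0, hab⟩
      rcases a0 with j | j <;> rcases b0 with k | k
      · rw [(hPi x).1] at hab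
        rcases mul_ne_zero_iff.mp hab with ⟨hne2, hne1⟩
        exact Or.inl ⟨hS₁ ▸ subset_closure ⟨j, k, hne1⟩, subset_tsupport _ hne2⟩
      · exact absurd ((hPi x).2.2.1 j k) hab
      · exact absurd ((hPi x).2.2.2 j k) hab
      · rw [(hPi x).2.1] at hab
        rcases mul_ne_zero_iff.mp hab with ⟨hne1, hne2⟩
        exact Or.inr ⟨subset_tsupport _ hne1, hS₂ ▸ subset_closure ⟨j, k, hne2⟩⟩
    · exact IsClosed.union
        (IsClosed.inter (hS₁c.preimage c1) ((isClosed_tsupport χ₂).preimage c2))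
        (IsClosed.inter ((isClosed_tsupport χ₁).preimage c1) (hS₂c.preimage c2))
end
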